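/- Rank-one locally minimal dilation does not imply minimal dilation with respect to general variations with fixed boundary values. Concretely, let Ω = {x ∈ ℝ² : 0 < |x| < 1}, fix γ > 0, and set u^γ(x) = |x|^γ·x. Then: (a) u^γ agrees with the identity map on ∂Ω (u^γ(x) = x for |x| = 1, and u^γ extends continuously to 0 by the value 0); (b) u^γ has rank-one locally minimal dilation on Ω; and (c) sup_{x∈Ω} K(D id(x)) = 2 < 2 + γ²/(γ+1) = sup_{x∈Ω} K(Du^γ(x)), so the identity map, which has the same boundary values, has strictly smaller supremal dilation than u^γ. This disproves that rank-one locally minimal dilation implies minimality among all maps with the same boundary values. -/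

import Mathlib

open Matrix Filter Topology

/-- The dilation function `K(P) = |P|² / det(PᵀP)^(1/n)`, where `|P|² = tr(PᵀP)`. -/
noncomputable def dil {N n : ℕ} (P : Matrix (Fin N) (Fin n) ℝ) : ℝ :=
  (Pᵀ * P).trace / (Pᵀ * P).det ^ ((1 : ℝ) / n)

/-- The Jacobian matrix of a map `u : ℝ² → ℝ²`. -/
noncomputable def jac (u : EuclideanSpace ℝ (Fin 2) → EuclideanSpace ℝ (Fin 2))
    (x : EuclideanSpace ℝ (Fin 2)) : Matrix (Fin 2) (Fin 2) ℝ :=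
  Matrix.of fun α i => fderiv ℝ u x (EuclideanSpace.single i 1) α

/-- `u` has Rank-One Locally Minimal Dilation on `Ω`: for every closed ball `B̄ ⊆ Ω`, every
`C¹` function `f` with compact support in the open ball `B` and every unit vector `ξ ∈ ℝ²`
such that `u + fξ` is an immersion on `B`, `sup_B K(Du) ≤ sup_B K(D(u + fξ))`. -/
def RankOneLocMinDil (Ω : Set (EuclideanSpace ℝ (Fin 2)))
    (u : EuclideanSpace ℝ (Fin 2) → EuclideanSpace ℝ (Fin 2)) : Prop :=
  ∀ (x₀ : EuclideanSpace ℝ (Fin 2)) (r : ℝ), 0 < r → Metric.closedBall x₀ r ⊆ Ω →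
    ∀ f : EuclideanSpace ℝ (Fin 2) → ℝ, ContDiff ℝ 1 f →
      tsupport f ⊆ Metric.ball x₀ r →
    ∀ ξ : EuclideanSpace ℝ (Fin 2), ‖ξ‖ = 1 →
      (∀ x ∈ Metric.ball x₀ r,
        0 < ((jac (fun y => u y + f y • ξ) x)ᵀ * jac (fun y => u y + f y • ξ) x).det) →
      sSup ((fun x => dil (jac u x)) '' Metric.ball x₀ r)
        ≤ sSup ((fun x => dil (jac (fun y => u y + f y • ξ) x)) '' Metric.ball x₀ r)

/-! The Jacobian of `u^γ` at `x ≠ 0` is `|x|^γ (I + γ x̂ x̂ᵀ)`, with singular values `|x|^γ` and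
`(1 + γ)|x|^γ`, so `u^γ` has the constant dilation `(1 + (1 + γ)²)/(1 + γ) = 2 + γ²/(γ + 1)` on `Ω`,
while the identity has dilation `2`. A map of constant dilation is rank-one locally minimal: a
compactly supported variation on a ball leaves the map unchanged near some point of the ball, where
the varied map therefore attains that constant. -/

local notation "ℝ²" => EuclideanSpace ℝ (Fin 2)

theorem Set.Nonempty.csSup_image_of_forall_eq {α β : Type*} [ConditionallyCompleteLattice β]
    {f : α → β} {s : Set α} {c : β} (hs : s.Nonempty) (h : ∀ x ∈ s, f x = c) :
    sSup (f '' s) = c := by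
  rw [Set.image_congr h, hs.image_const, csSup_singleton]

theorem exists_mem_ball_notMem_of_isClosed_subset {E : Type*} [NormedAddCommGroup E]
    [NormedSpace ℝ E] [Nontrivial E] {x₀ : E} {r : ℝ} (hr : 0 < r) {K : Set E}
    (hK : IsClosed K) (hKB : K ⊆ Metric.ball x₀ r) : ∃ x ∈ Metric.ball x₀ r, x ∉ K := by
  by_contra! hBK
  obtain ⟨y, hy⟩ := (NormedSpace.sphere_nonempty (x := x₀)).mpr hr.le
  have hy_closure : y ∈ closure (Metric.ball x₀ r) := by
    rw [closure_ball x₀ hr.ne']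
    exact Metric.sphere_subset_closedBall hy
  have hyB : y ∈ Metric.ball x₀ r := hKB (closure_minimal hBK hK hy_closure)
  exact (Metric.mem_sphere.mp hy ▸ Metric.mem_ball.mp hyB).false

section Dilation

variable {N n : ℕ}

theorem continuousAt_dil {P : Matrix (Fin N) (Fin n) ℝ} (hP : 0 < (Pᵀ * P).det) :
    ContinuousAt dil P := by
  have hG : Continuous fun Q : Matrix (Fin N) (Fin n) ℝ => Qᵀ * Q :=
    continuous_id.matrix_transpose.matrix_mul continuous_id
  refine hG.matrix_trace.continuousAt.div
    ((hG.matrix_det.continuousAt).rpow_const (Or.inl hP.ne')) ?_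
  exact (Real.rpow_pos_of_pos hP _).ne'

theorem dil_one : dil (1 : Matrix (Fin n) (Fin n) ℝ) = n := by
  simp [dil]

theorem dil_fin_two (M : Matrix (Fin 2) (Fin 2) ℝ) :
    dil M = (M 0 0 ^ 2 + M 0 1 ^ 2 + M 1 0 ^ 2 + M 1 1 ^ 2) / |M.det| := by
  rw [dil, det_mul, det_transpose, ← sq, Nat.cast_ofNat, ← Real.sqrt_eq_rpow,
    Real.sqrt_sq_eq_abs, trace_fin_two]
  simp only [mul_apply, Fin.sum_univ_two, transpose_apply]
  ring_nf

theorem det_smul_one_add_smul_vecMulVec (a b : ℝ) (v : Fin 2 → ℝ) :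
    (a • 1 + b • vecMulVec v v : Matrix (Fin 2) (Fin 2) ℝ).det = a * (a + b * (v ⬝ᵥ v)) := by
  simp [det_fin_two, vecMulVec_apply, dotProduct, Fin.sum_univ_two]
  ring

theorem dil_smul_one_add_smul_vecMulVec (a b : ℝ) (v : Fin 2 → ℝ) :
    dil (a • 1 + b • vecMulVec v v : Matrix (Fin 2) (Fin 2) ℝ)
      = (a ^ 2 + (a + b * (v ⬝ᵥ v)) ^ 2) / |a * (a + b * (v ⬝ᵥ v))| := by
  rw [dil_fin_two, det_smul_one_add_smul_vecMulVec]
  congr 1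
  simp [vecMulVec_apply, dotProduct, Fin.sum_univ_two]
  ring

end Dilation

theorem jac_congr {u v : ℝ² → ℝ²} {x : ℝ²} (h : u =ᶠ[𝓝 x] v) : jac u x = jac v x := by
  simp only [jac, h.fderiv_eq]

theorem jac_add_smul_of_notMem_tsupport {u : ℝ² → ℝ²} {f : ℝ² → ℝ} {ξ : ℝ²} {x : ℝ²}
    (hx : x ∉ tsupport f) : jac (fun y => u y + f y • ξ) x = jac u x := by
  refine jac_congr ?_
  filter_upwards [notMem_tsupport_iff_eventuallyEq.mp hx] with y hy
  simp [hy]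

theorem continuousOn_jac {v : ℝ² → ℝ²} {U : Set ℝ²} (hU : IsOpen U)
    (hv : ContDiffOn ℝ 1 v U) : ContinuousOn (jac v) U := by
  have h := hv.continuousOn_fderiv_of_isOpen hU le_rfl
  refine continuousOn_pi.mpr fun α => continuousOn_pi.mpr fun i => ?_
  exact ((EuclideanSpace.proj α).continuous.comp_continuousOn
    (h.clm_apply continuousOn_const))

theorem jac_id (x : ℝ²) : jac (fun y => y) x = 1 := by
  ext α i
  simp [jac, one_apply]

theorem rankOneLocMinDil_of_dil_eqOn {Ω : Set ℝ²} (hΩ : IsOpen Ω) {u : ℝ² → ℝ²} {c : ℝ}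
    (hu : ContDiffOn ℝ 1 u Ω) (hu_imm : ∀ x ∈ Ω, 0 < ((jac u x)ᵀ * jac u x).det)
    (hdil : ∀ x ∈ Ω, dil (jac u x) = c) : RankOneLocMinDil Ω u := by
  intro x₀ r hr hB f hf hsupp ξ _ hv_imm
  set v := fun y => u y + f y • ξ
  have hv_imm' : ∀ x ∈ Metric.closedBall x₀ r, 0 < ((jac v x)ᵀ * jac v x).det := by
    intro x hx
    by_cases hxB : x ∈ Metric.ball x₀ r
    · exact hv_imm x hxB
    · rw [jac_add_smul_of_notMem_tsupport fun h => hxB (hsupp h)]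
      exact hu_imm x (hB hx)
  have hv_cont : ContinuousOn (fun x => dil (jac v x)) (Metric.closedBall x₀ r) := fun x hx =>
    (continuousAt_dil (hv_imm' x hx)).comp_continuousWithinAt
      ((continuousOn_jac hΩ (hu.add (hf.contDiffOn.smul contDiffOn_const))).mono hB x hx)
  -- needed because `sSup` of a set of reals that is not bounded above is `0`
  have hv_bdd : BddAbove ((fun x => dil (jac v x)) '' Metric.ball x₀ r) :=
    ((isCompact_closedBall x₀ r).bddAbove_image hv_cont).mono
      (Set.image_mono Metric.ball_subset_closedBall)
  obtain ⟨x₁, hx₁, hx₁f⟩ :=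
    exists_mem_ball_notMem_of_isClosed_subset hr (isClosed_tsupport f) hsupp
  calc sSup ((fun x => dil (jac u x)) '' Metric.ball x₀ r)
      ≤ c := csSup_le ((Metric.nonempty_ball.mpr hr).image _) <| by
        rintro _ ⟨x, hx, rfl⟩
        exact (hdil x (hB (Metric.ball_subset_closedBall hx))).le
    _ = dil (jac v x₁) := by
        rw [jac_add_smul_of_notMem_tsupport hx₁f, hdil x₁ (hB (Metric.ball_subset_closedBall hx₁))]
    _ ≤ _ := le_csSup hv_bdd ⟨x₁, hx₁, rfl⟩

theorem hasFDerivAt_norm_rpow_of_ne_zero {E : Type*} [NormedAddCommGroup E] [InnerProductSpace ℝ E]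
    (γ : ℝ) {x : E} (hx : x ≠ 0) :
    HasFDerivAt (fun y : E => ‖y‖ ^ γ) ((γ * ‖x‖ ^ (γ - 2)) • innerSL ℝ x) x := by
  convert ((hasStrictFDerivAt_norm_sq x).rpow_const (p := γ / 2) (by simp [hx])).hasFDerivAt
    using 1
  · ext y
    simp_rw [← Real.rpow_natCast_mul (norm_nonneg _)]
    norm_num
    ring_nf
  · simp_rw [← Real.rpow_natCast_mul (norm_nonneg _), ← Nat.cast_smul_eq_nsmul ℝ, smul_smul]
    ring_nf

theorem hasFDerivAt_norm_rpow_smul {E : Type*} [NormedAddCommGroup E] [InnerProductSpace ℝ E]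
    (γ : ℝ) {x : E} (hx : x ≠ 0) :
    HasFDerivAt (fun y : E => ‖y‖ ^ γ • y)
      (‖x‖ ^ γ • ContinuousLinearMap.id ℝ E
        + ((γ * ‖x‖ ^ (γ - 2)) • innerSL ℝ x).smulRight x) x :=
  (hasFDerivAt_norm_rpow_of_ne_zero γ hx).smul (hasFDerivAt_id x)

theorem contDiffOn_norm_rpow_smul {E : Type*} [NormedAddCommGroup E] [InnerProductSpace ℝ E]
    (γ : ℝ) : ContDiffOn ℝ 1 (fun y : E => ‖y‖ ^ γ • y) {0}ᶜ := fun _ hx =>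
  (((contDiffAt_norm ℝ hx).rpow_const_of_ne (norm_ne_zero_iff.mpr hx)).smul
    contDiffAt_id).contDiffWithinAt

theorem jac_norm_rpow_smul (γ : ℝ) {x : ℝ²} (hx : x ≠ 0) :
    jac (fun y => ‖y‖ ^ γ • y) x = ‖x‖ ^ γ • 1 + (γ * ‖x‖ ^ (γ - 2)) • vecMulVec x.ofLp x.ofLp := by
  ext α i
  simp [jac, (hasFDerivAt_norm_rpow_smul γ hx).fderiv, one_apply, vecMulVec_apply,
    EuclideanSpace.inner_single_right]
  ring

theorem dotProduct_ofLp_self_eq_norm_sq {ι : Type*} [Fintype ι] (x : EuclideanSpace ℝ ι) :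
    x.ofLp ⬝ᵥ x.ofLp = ‖x‖ ^ 2 := by
  rw [← real_inner_self_eq_norm_sq, EuclideanSpace.inner_eq_star_dotProduct]
  simp

theorem norm_rpow_add_mul_dotProduct {γ : ℝ} {x : ℝ²} (hx : x ≠ 0) :
    ‖x‖ ^ γ + γ * ‖x‖ ^ (γ - 2) * (x.ofLp ⬝ᵥ x.ofLp) = (γ + 1) * ‖x‖ ^ γ := by
  rw [dotProduct_ofLp_self_eq_norm_sq, mul_assoc, ← Real.rpow_natCast,
    ← Real.rpow_add (norm_pos_iff.mpr hx)]
  norm_num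
  ring

theorem det_jac_norm_rpow_smul (γ : ℝ) {x : ℝ²} (hx : x ≠ 0) :
    (jac (fun y => ‖y‖ ^ γ • y) x).det = (γ + 1) * (‖x‖ ^ γ) ^ 2 := by
  rw [jac_norm_rpow_smul γ hx, det_smul_one_add_smul_vecMulVec, norm_rpow_add_mul_dotProduct hx]
  ring

theorem dil_jac_norm_rpow_smul {γ : ℝ} (hγ : -1 < γ) {x : ℝ²} (hx : x ≠ 0) :
    dil (jac (fun y => ‖y‖ ^ γ • y) x) = 2 + γ ^ 2 / (γ + 1) := by
  have ha : 0 < ‖x‖ ^ γ := Real.rpow_pos_of_pos (norm_pos_iff.mpr hx) γ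
  have hγ' : 0 < γ + 1 := by linarith
  rw [jac_norm_rpow_smul γ hx, dil_smul_one_add_smul_vecMulVec, norm_rpow_add_mul_dotProduct hx,
    abs_of_pos (by positivity)]
  field_simp
  ring

theorem tendsto_norm_rpow_smul_nhds_zero {E : Type*} [NormedAddCommGroup E] [NormedSpace ℝ E]
    {γ : ℝ} (hγ : -1 < γ) : Tendsto (fun x : E => ‖x‖ ^ γ • x) (𝓝 0) (𝓝 0) := by
  rw [tendsto_zero_iff_norm_tendsto_zero]
  have h : Tendsto (fun x : E => ‖x‖ ^ (γ + 1)) (𝓝 0) (𝓝 0) := by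
    simpa [Real.zero_rpow (by linarith : γ + 1 ≠ 0)] using
      (continuous_norm.tendsto (0 : E)).rpow_const (Or.inr (by linarith : (0 : ℝ) ≤ γ + 1))
  refine h.congr fun x => ?_
  rw [norm_smul, Real.norm_of_nonneg (by positivity), Real.rpow_add_one' (norm_nonneg x)
    (by linarith)]

/-- on the punctured disc `Ω = {0 < |x| < 1} ⊆ ℝ²` and for `γ > 0`, the map
`u^γ(x) = |x|^γ x` (a) agrees with the identity on `∂Ω` (it equals `x` for `|x| = 1` and
tends to `0` at `0`); (b) has rank-one locally minimal dilation on `Ω`; and yet (c) its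
supremal dilation `2 + γ²/(γ+1)` is strictly larger than that of the identity map, which is
`2`. Hence rank-one locally minimal dilation does not imply minimality of the supremal
dilation among maps with the same boundary values. -/
theorem rankOne_min_strictly_weaker (γ : ℝ) (hγ : 0 < γ) :
    (∀ x : EuclideanSpace ℝ (Fin 2), ‖x‖ = 1 →
        (‖x‖ ^ γ) • x = x) ∧
    Tendsto (fun x : EuclideanSpace ℝ (Fin 2) => (‖x‖ ^ γ) • x)
      (𝓝[{(0 : EuclideanSpace ℝ (Fin 2))}ᶜ] 0) (𝓝 0) ∧
    RankOneLocMinDil {x : EuclideanSpace ℝ (Fin 2) | 0 < ‖x‖ ∧ ‖x‖ < 1}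
      (fun x => (‖x‖ ^ γ) • x) ∧
    sSup ((fun x => dil (jac (fun y => y) x))
        '' {x : EuclideanSpace ℝ (Fin 2) | 0 < ‖x‖ ∧ ‖x‖ < 1}) = 2 ∧
    sSup ((fun x => dil (jac (fun y => (‖y‖ ^ γ) • y) x))
        '' {x : EuclideanSpace ℝ (Fin 2) | 0 < ‖x‖ ∧ ‖x‖ < 1}) = 2 + γ ^ 2 / (γ + 1) ∧
    (2 : ℝ) < 2 + γ ^ 2 / (γ + 1) := by
  set Ω : Set ℝ² := {x | 0 < ‖x‖ ∧ ‖x‖ < 1}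
  have hγ' : -1 < γ := by linarith
  have hΩ_open : IsOpen Ω :=
    (isOpen_lt continuous_const continuous_norm).inter (isOpen_lt continuous_norm continuous_const)
  have hΩ_ne : ∀ x ∈ Ω, x ≠ 0 := fun x hx => norm_pos_iff.mp hx.1
  have hΩ_nonempty : Ω.Nonempty :=
    ⟨EuclideanSpace.single 0 (1 / 2), by norm_num [Ω, PiLp.norm_single]⟩
  have h_imm : ∀ x ∈ Ω,
      0 < ((jac (fun y => ‖y‖ ^ γ • y) x)ᵀ * jac (fun y => ‖y‖ ^ γ • y) x).det := fun x hx => by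
    have := Real.rpow_pos_of_pos hx.1 γ
    rw [det_mul, det_transpose, det_jac_norm_rpow_smul γ (hΩ_ne x hx)]
    positivity
  refine ⟨fun x hx => by rw [hx, Real.one_rpow, one_smul],
    (tendsto_norm_rpow_smul_nhds_zero hγ').mono_left nhdsWithin_le_nhds,
    rankOneLocMinDil_of_dil_eqOn hΩ_open ((contDiffOn_norm_rpow_smul γ).mono hΩ_ne) h_imm
      fun x hx => dil_jac_norm_rpow_smul hγ' (hΩ_ne x hx),
    hΩ_nonempty.csSup_image_of_forall_eq fun x _ => by rw [jac_id, dil_one]; norm_num,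
    hΩ_nonempty.csSup_image_of_forall_eq fun x hx => dil_jac_norm_rpow_smul hγ' (hΩ_ne x hx),
    lt_add_of_pos_right 2 (by positivity)⟩
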